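/- Let p ≥ 1 and n ≥ 2 be integers and x, y > 0 real numbers. Let Z be the (p+n)×n matrix whose first p rows have all entries equal to x and whose last n rows have all entries equal to y, and let Q be the (2n+p−1)×(2n+p−1) symmetric matrix associated to Z, written Q = A + E with A diagonal and E off-diagonal. Then E has rank at most 2, every principal minor of E of order 1 or of order ≥ 3 vanishes, and consequently, with S_k as in the diagonal expansion of det(A+E): det E = 0, S_{2n+p−2} = 0, S_{2n+p−i} = 0 for all i ≥ 4, and det Q = det A + S_{2n+p−3}. -/

import Mathlib

/-- The `(m+n−1) × (m+n−1)` symmetric matrix `Q` associated to an `m × n` matrix `Z`. -/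
noncomputable def Qmat {m n : ℕ} (z : Fin m → Fin n → ℝ) :
    Matrix (Fin (m + n - 1)) (Fin (m + n - 1)) ℝ :=
  Matrix.of fun i j =>
    if hi : (i : ℕ) < m then
      if hj : (j : ℕ) < m then
        if i = j then ∑ k : Fin n, (z ⟨i, hi⟩ k + z ⟨i, hi⟩ k ^ 2) else 0
      else
        z ⟨i, hi⟩ ⟨(j : ℕ) - m, by have := j.isLt; omega⟩ ^ 2
          + z ⟨i, hi⟩ ⟨(j : ℕ) - m, by have := j.isLt; omega⟩
    else
      if hj : (j : ℕ) < m then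
        z ⟨j, hj⟩ ⟨(i : ℕ) - m, by have := i.isLt; omega⟩ ^ 2
          + z ⟨j, hj⟩ ⟨(i : ℕ) - m, by have := i.isLt; omega⟩
      else
        if i = j then
          ∑ l : Fin m, (z l ⟨(i : ℕ) - m, by have := i.isLt; omega⟩
            + z l ⟨(i : ℕ) - m, by have := i.isLt; omega⟩ ^ 2)
        else 0

/-- The principal minor of `E` on the index set `T`. -/
noncomputable def principalMinor {N : ℕ} (E : Matrix (Fin N) (Fin N) ℝ)
    (T : Finset (Fin N)) : ℝ :=
  (E.submatrix (T.orderEmbOfFin rfl) (T.orderEmbOfFin rfl)).det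

/-- The term `S_k` of the diagonal expansion of `det(A + E)` with `A = diag(a)`. -/
noncomputable def Sterm {N : ℕ} (a : Fin N → ℝ) (E : Matrix (Fin N) (Fin N) ℝ)
    (k : ℕ) : ℝ :=
  ∑ S ∈ Finset.powersetCard k (Finset.univ : Finset (Fin N)),
    (∏ i ∈ S, a i) * principalMinor E Sᶜ

/-- The `(p+n) × n` matrix whose first `p` rows are constantly `x` and whose last `n`
rows are constantly `y`. -/
def rowZ (p n : ℕ) (x y : ℝ) : Fin (p + n) → Fin n → ℝ :=
  fun i _ => if (i : ℕ) < p then x else y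

/-!
Because the rows of `Z` are constant, the off-diagonal entries of `Q` in row `j < m` all equal
`u_j = z_j² + z_j`, so `E = u vᵀ + v uᵀ` with `v` the indicator of the last `n - 1` indices.
Thus `E` factors through a 2-dimensional space: its principal minors of order `≥ 3` vanish, and
those of order `1` are its zero diagonal entries. In the diagonal expansion of `det (A + E)` only
the terms whose complementary minor has order `0` or `2` survive.
-/

open Matrix Finset

theorem Matrix.det_mul_eq_zero_of_card_lt {m k R : Type*} [Fintype m] [DecidableEq m]
    [Fintype k] [CommRing R] [IsDomain R] (C : Matrix m k R) (D : Matrix k m R)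
    (h : Fintype.card k < Fintype.card m) : (C * D).det = 0 := by
  by_contra hdet
  have := (rank_of_det_ne_zero hdet).symm.trans_le
    ((rank_mul_le_right C D).trans (rank_le_card_height D))
  omega

theorem Matrix.vecMulVec_add_vecMulVec_eq_mul {m R : Type*} [CommRing R] (u v : m → R) :
    vecMulVec u v + vecMulVec v u = (of fun i => ![u i, v i]) * of ![v, u] := by
  ext i j
  simp [vecMulVec_apply, mul_apply, Fin.sum_univ_two]

theorem Matrix.rank_vecMulVec_add_vecMulVec_le {m R : Type*} [Fintype m] [CommRing R]
    [Nontrivial R] (u v : m → R) : (vecMulVec u v + vecMulVec v u).rank ≤ 2 := by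
  rw [vecMulVec_add_vecMulVec_eq_mul]
  exact (rank_mul_le_right _ _).trans <| (rank_le_card_height _).trans_eq (Fintype.card_fin 2)

theorem Matrix.det_vecMulVec_add_vecMulVec {m R : Type*} [Fintype m] [DecidableEq m] [CommRing R]
    [IsDomain R] (u v : m → R) (h : 2 < Fintype.card m) :
    (vecMulVec u v + vecMulVec v u).det = 0 := by
  rw [vecMulVec_add_vecMulVec_eq_mul]
  exact det_mul_eq_zero_of_card_lt _ _ (by simpa using h)

theorem Matrix.det_diagonal_add {n R : Type*} [Fintype n] [DecidableEq n] [CommRing R]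
    (a : n → R) (E : Matrix n n R) :
    (diagonal a + E).det =
      ∑ s : Finset n, (∏ i ∈ s, a i) * (E.submatrix ((↑) : ↥sᶜ → n) (↑)).det := by
  -- Expand multilinearly in the rows; row `i` of `diagonal a` is `a i` times the unit row.
  change detRowAlternating ((fun i => diagonal a i) + fun i => E i) = _
  rw [AlternatingMap.map_add_univ]
  refine sum_congr rfl fun s _ => ?_
  let M : n → n → R := sᶜ.piecewise E.row (1 : Matrix n n R).row
  have hrows : s.piecewise (fun i => diagonal a i) (fun i => E i) =
      s.piecewise (fun i => a i • M i) M := by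
    ext i j
    by_cases hi : i ∈ s
    · simp [M, hi, diagonal_apply, one_apply]
    · simp [M, hi]
  rw [hrows]
  exact (detRowAlternating.toMultilinearMap.map_piecewise_smul a M s).trans
    (congrArg _ (det_piecewise_one_eq_submatrix_det E sᶜ))

section

variable {N : ℕ}

theorem principalMinor_eq_det_submatrix (E : Matrix (Fin N) (Fin N) ℝ) (T : Finset (Fin N)) :
    principalMinor E T = (E.submatrix ((↑) : T → Fin N) (↑)).det := by
  rw [principalMinor, ← det_submatrix_equiv_self (T.orderIsoOfFin rfl).toEquiv]
  rfl

theorem principalMinor_eq_zero_of_card_eq_one {E : Matrix (Fin N) (Fin N) ℝ}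
    (hE : ∀ i, E i i = 0) {T : Finset (Fin N)} (hT : T.card = 1) : principalMinor E T = 0 := by
  have : Unique (Fin T.card) := hT ▸ inferInstance
  rw [principalMinor, det_unique]
  exact hE _

theorem principalMinor_vecMulVec_add_vecMulVec (u v : Fin N → ℝ) {T : Finset (Fin N)}
    (hT : 3 ≤ T.card) : principalMinor (vecMulVec u v + vecMulVec v u) T = 0 := by
  have hsub (f : Fin T.card → Fin N) : (vecMulVec u v + vecMulVec v u).submatrix f f =
      vecMulVec (u ∘ f) (v ∘ f) + vecMulVec (v ∘ f) (u ∘ f) := rfl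
  rw [principalMinor, hsub]
  exact det_vecMulVec_add_vecMulVec _ _ ((Fintype.card_fin _).symm ▸ hT)

theorem det_diagonal_add_eq_sum_Sterm (a : Fin N → ℝ) (E : Matrix (Fin N) (Fin N) ℝ) :
    (diagonal a + E).det = ∑ k ∈ range (N + 1), Sterm a E k := by
  rw [det_diagonal_add, ← powerset_univ, sum_powerset, card_univ, Fintype.card_fin]
  simp only [Sterm, principalMinor_eq_det_submatrix]

theorem Sterm_self (a : Fin N → ℝ) (E : Matrix (Fin N) (Fin N) ℝ) :
    Sterm a E N = (diagonal a).det := by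
  have huniv : powersetCard N (univ : Finset (Fin N)) = {univ} := by
    simpa using powersetCard_self (univ : Finset (Fin N))
  rw [Sterm, huniv, sum_singleton, compl_univ,
    principalMinor_eq_det_submatrix, det_isEmpty, mul_one, det_diagonal]

theorem Sterm_eq_zero {a : Fin N → ℝ} {E : Matrix (Fin N) (Fin N) ℝ} {k : ℕ}
    (h : ∀ T : Finset (Fin N), T.card = N - k → principalMinor E T = 0) : Sterm a E k = 0 :=
  sum_eq_zero fun S hS => by
    rw [h Sᶜ (by rw [card_compl, Fintype.card_fin, (mem_powersetCard_univ.1 hS)]), mul_zero]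

theorem det_diagonal_add_of_principalMinor_eq_zero (hN : 2 ≤ N) (a : Fin N → ℝ)
    {E : Matrix (Fin N) (Fin N) ℝ}
    (h1 : ∀ T : Finset (Fin N), T.card = 1 → principalMinor E T = 0)
    (h3 : ∀ T : Finset (Fin N), 3 ≤ T.card → principalMinor E T = 0) :
    (diagonal a + E).det = (diagonal a).det + Sterm a E (N - 2) := by
  rw [det_diagonal_add_eq_sum_Sterm, sum_eq_add N (N - 2) (by omega), Sterm_self]
  · intro k hk ⟨hkN, hkN2⟩
    refine Sterm_eq_zero fun T hT => ?_
    have hkN' : k ≤ N := Nat.lt_succ_iff.1 (mem_range.1 hk)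
    rcases Nat.lt_or_ge (N - k) 3 with hlt | hge
    · exact h1 T (by omega)
    · exact h3 T (hT ▸ hge)
  · simp
  · simp

end

theorem Qmat_sub_diagonal_of_rowConstant {m n : ℕ} (r : Fin m → ℝ) :
    let Q := Qmat (fun j (_ : Fin n) => r j)
    let u : Fin (m + n - 1) → ℝ := fun i =>
      if h : (i : ℕ) < m then r ⟨i, h⟩ ^ 2 + r ⟨i, h⟩ else 0
    let v : Fin (m + n - 1) → ℝ := fun i => if (i : ℕ) < m then 0 else 1
    Q - diagonal (fun i => Q i i) = vecMulVec u v + vecMulVec v u := by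
  dsimp only
  ext i j
  rcases eq_or_ne i j with rfl | hij
  · by_cases hi : (i : ℕ) < m <;> simp [hi, vecMulVec_apply]
  · simp only [Matrix.sub_apply, diagonal_apply_ne _ hij, Matrix.add_apply, vecMulVec_apply, Qmat,
      of_apply, if_neg hij]
    split_ifs <;> first | omega | ring

theorem offDiagonal_part_rowConstant_general (p n : ℕ) (hn : 2 ≤ n)
    (x y : ℝ)
    (Q : Matrix (Fin ((p + n) + n - 1)) (Fin ((p + n) + n - 1)) ℝ)
    (hQ : Q = Qmat (rowZ p n x y))
    (E : Matrix (Fin ((p + n) + n - 1)) (Fin ((p + n) + n - 1)) ℝ)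
    (hE : E = Q - Matrix.diagonal (fun i => Q i i)) :
    E.rank ≤ 2 ∧
    (∀ T : Finset (Fin ((p + n) + n - 1)), T.card = 1 → principalMinor E T = 0) ∧
    (∀ T : Finset (Fin ((p + n) + n - 1)), 3 ≤ T.card → principalMinor E T = 0) ∧
    E.det = 0 ∧
    Sterm (fun i => Q i i) E (2 * n + p - 2) = 0 ∧
    (∀ i : ℕ, 4 ≤ i → Sterm (fun i => Q i i) E (2 * n + p - i) = 0) ∧
    Q.det = (Matrix.diagonal (fun i => Q i i)).det
        + Sterm (fun i => Q i i) E (2 * n + p - 3) := by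
  obtain ⟨u, v, hEuv⟩ :
      ∃ u v : Fin (p + n + n - 1) → ℝ, E = vecMulVec u v + vecMulVec v u :=
    ⟨_, _, by
      subst hE hQ
      exact Qmat_sub_diagonal_of_rowConstant fun j => if (j : ℕ) < p then x else y⟩
  have hdiag : ∀ i, E i i = 0 := fun i => by simp [hE]
  have minor1 : ∀ T : Finset (Fin (p + n + n - 1)), T.card = 1 → principalMinor E T = 0 :=
    fun T => principalMinor_eq_zero_of_card_eq_one hdiag
  have minor3 : ∀ T : Finset (Fin (p + n + n - 1)), 3 ≤ T.card → principalMinor E T = 0 :=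
    fun T hT => hEuv ▸ principalMinor_vecMulVec_add_vecMulVec u v hT
  have hQE : Q = diagonal (fun i => Q i i) + E := by rw [hE, add_sub_cancel]
  refine ⟨hEuv ▸ rank_vecMulVec_add_vecMulVec_le u v, minor1, minor3,
    hEuv ▸ det_vecMulVec_add_vecMulVec u v (by rw [Fintype.card_fin]; omega),
    Sterm_eq_zero fun T hT => minor1 T (by omega),
    fun i hi => Sterm_eq_zero fun T hT => minor3 T (by omega), ?_⟩
  rw [show 2 * n + p - 3 = p + n + n - 1 - 2 by omega,
    ← det_diagonal_add_of_principalMinor_eq_zero (by omega) _ minor1 minor3, ← hQE]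

/-- For the row-constant matrix `Z`, the off-diagonal part `E` of the associated matrix
`Q` has rank at most `2`, all principal minors of `E` of order `1` or of order `≥ 3`
vanish, and consequently `det E = 0`, `S_{2n+p−2} = 0`, `S_{2n+p−i} = 0` for `i ≥ 4`,
and `det Q = det A + S_{2n+p−3}`. -/
theorem offDiagonal_part_rowConstant (p n : ℕ) (hp : 1 ≤ p) (hn : 2 ≤ n)
    (x y : ℝ) (hx : 0 < x) (hy : 0 < y)
    (Q : Matrix (Fin ((p + n) + n - 1)) (Fin ((p + n) + n - 1)) ℝ)
    (hQ : Q = Qmat (rowZ p n x y))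
    (E : Matrix (Fin ((p + n) + n - 1)) (Fin ((p + n) + n - 1)) ℝ)
    (hE : E = Q - Matrix.diagonal (fun i => Q i i)) :
    E.rank ≤ 2 ∧
    (∀ T : Finset (Fin ((p + n) + n - 1)), T.card = 1 → principalMinor E T = 0) ∧
    (∀ T : Finset (Fin ((p + n) + n - 1)), 3 ≤ T.card → principalMinor E T = 0) ∧
    E.det = 0 ∧
    Sterm (fun i => Q i i) E (2 * n + p - 2) = 0 ∧
    (∀ i : ℕ, 4 ≤ i → Sterm (fun i => Q i i) E (2 * n + p - i) = 0) ∧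
    Q.det = (Matrix.diagonal (fun i => Q i i)).det
        + Sterm (fun i => Q i i) E (2 * n + p - 3) :=
  offDiagonal_part_rowConstant_general p n hn x y Q hQ E hE
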